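/- arXiv:math/0508256 — 2 statements merged into one kernel-verified Lean document; each statement's English description precedes it below -/
import Mathlib

section
/- For a matrix U in SO(N) with n eigenvalues equal to 1 and remaining eigenvalues e^{±iθ_1},...,e^{±iθ_M} (N = n + 2M), the characteristic polynomial Λ_U(e^{iθ}) = (1 - e^{-iθ})^n ∏_{j=1}^M (1 - e^{i(θ_j - θ)})(1 - e^{i(-θ_j - θ)}) satisfies: the n-th derivative with respect to θ evaluated at θ = 0 has absolute value n! · 2^M · ∏_{j=1}^M (1 - cos θ_j). -/
/-!
With `f t = 1 - e^{-it}` and `h` the remaining product, `Λ = f ^ n * h` where `f 0 = 0` and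
`f' 0 = i`. Differentiating `f ^ (m + 1) * h` gives `f ^ m * h̃` with
`h̃ = (m + 1) f' h + f h'`, so `h̃ 0 = (m + 1) f'(0) h(0)`; by induction the `n`-th derivative
of `f ^ n * h` at `0` is `n! f'(0)^n h(0) = n! iⁿ h(0)`. Finally
`(1 - e^{iθ})(1 - e^{-iθ}) = 2 (1 - cos θ) ≥ 0`.
-/

open Complex Finset
open scoped ContDiff Nat

@[fun_prop]
lemma Complex.contDiff_ofReal {n : WithTop ℕ∞} : ContDiff ℝ n ((↑) : ℝ → ℂ) :=
  ofRealCLM.contDiff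

section PowMul
variable {𝕜 𝔸 : Type*} [NontriviallyNormedField 𝕜] [NormedCommRing 𝔸] [NormedAlgebra 𝕜 𝔸]

lemma deriv_pow_succ_mul {f h : 𝕜 → 𝔸} (hf : Differentiable 𝕜 f) (hh : Differentiable 𝕜 h)
    (m : ℕ) : deriv (fun t => f t ^ (m + 1) * h t) =
      fun t => f t ^ m * ((m + 1 : 𝔸) * deriv f t * h t + f t * deriv h t) := by
  funext t
  rw [(((hf t).hasDerivAt.fun_pow (m + 1)).fun_mul (hh t).hasDerivAt).deriv]
  push_cast
  ring

theorem iteratedDeriv_pow_mul_of_eq_zero {f : 𝕜 → 𝔸} {a : 𝕜} (hf : ContDiff 𝕜 ∞ f)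
    (hfa : f a = 0) (n : ℕ) {h : 𝕜 → 𝔸} (hh : ContDiff 𝕜 ∞ h) :
    iteratedDeriv n (fun t => f t ^ n * h t) a = (n ! : 𝔸) * deriv f a ^ n * h a := by
  induction n generalizing h with
  | zero => simp
  | succ m ih =>
    obtain ⟨hf_diff, hf_deriv⟩ := contDiff_infty_iff_deriv.mp hf
    obtain ⟨hh_diff, hh_deriv⟩ := contDiff_infty_iff_deriv.mp hh
    rw [iteratedDeriv_succ', deriv_pow_succ_mul hf_diff hh_diff,
      ih (((contDiff_const.mul hf_deriv).mul hh).add (hf.mul hh_deriv))]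
    simp only [hfa, zero_mul, add_zero, Nat.factorial_succ]
    push_cast
    ring
end PowMul

lemma one_sub_exp_mul_one_sub_exp_neg (x : ℝ) :
    (1 - exp (I * x)) * (1 - exp (I * -x)) = ((2 * (1 - Real.cos x) : ℝ) : ℂ) := by
  have h_prod : exp (I * x) * exp (-(I * x)) = 1 := by rw [← exp_add]; simp
  have h_sum : 2 * cos x = exp (I * x) + exp (-(I * x)) := by rw [two_cos]; ring_nf
  rw [mul_neg]
  push_cast
  linear_combination h_prod + h_sum

lemma hasDerivAt_one_sub_exp_neg_I_mul (t : ℝ) :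
    HasDerivAt (fun t : ℝ => 1 - exp (-(I * t))) (I * exp (-(I * t))) t := by
  simpa [mul_comm] using (((hasDerivAt_id (t : ℂ)).const_mul I).neg.cexp.const_sub 1).comp_ofReal

theorem abs_iteratedDeriv_char_poly_general (n M : ℕ)
    (θ : Fin M → ℝ) :
    ‖iteratedDeriv n (fun t : ℝ =>
        (1 - Complex.exp (-(Complex.I * (t : ℂ)))) ^ n *
        ∏ j : Fin M,
          (1 - Complex.exp (Complex.I * ((θ j : ℂ) - (t : ℂ)))) *
          (1 - Complex.exp (Complex.I * (-(θ j : ℂ) - (t : ℂ))))) 0‖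
      = (n.factorial : ℝ) * 2 ^ M * ∏ j : Fin M, (1 - Real.cos (θ j)) := by
  rw [iteratedDeriv_pow_mul_of_eq_zero (by fun_prop) (by simp) n (by fun_prop),
    (hasDerivAt_one_sub_exp_neg_I_mul 0).deriv]
  simp only [ofReal_zero, mul_zero, neg_zero, exp_zero, mul_one, sub_zero,
    one_sub_exp_mul_one_sub_exp_neg, ← ofReal_prod]
  have h_nonneg : 0 ≤ ∏ j, 2 * (1 - Real.cos (θ j)) :=
    prod_nonneg fun j _ => by linarith [Real.cos_le_one (θ j)]
  rw [norm_mul, norm_mul, norm_pow, norm_I, one_pow, mul_one, norm_natCast, norm_real,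
    Real.norm_of_nonneg h_nonneg, prod_mul_distrib, prod_const, card_univ, Fintype.card_fin,
    mul_assoc]

/-- For a matrix in `SO(N)` with `n` eigenvalues equal to `1` and
remaining eigenvalues `e^{±iθ_j}` (`N = n + 2M`), the `n`-th derivative at `θ = 0`
of the characteristic polynomial
`Λ(θ) = (1 - e^{-iθ})^n ∏_j (1 - e^{i(θ_j-θ)})(1 - e^{i(-θ_j-θ)})`
has absolute value `n! · 2^M · ∏_j (1 - cos θ_j)`. -/
theorem abs_iteratedDeriv_char_poly (n M : ℕ) (hn : 0 < n) (hM : 0 < M)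
    (θ : Fin M → ℝ) :
    ‖iteratedDeriv n (fun t : ℝ =>
        (1 - Complex.exp (-(Complex.I * (t : ℂ)))) ^ n *
        ∏ j : Fin M,
          (1 - Complex.exp (Complex.I * ((θ j : ℂ) - (t : ℂ)))) *
          (1 - Complex.exp (Complex.I * (-(θ j : ℂ) - (t : ℂ))))) 0‖
      = (n.factorial : ℝ) * 2 ^ M * ∏ j : Fin M, (1 - Real.cos (θ j)) :=
  abs_iteratedDeriv_char_poly_general n M θ
end

section
/- Pointwise small-θ behavior of the scaled 1-level density: the function L(θ) = (π²/2)·θ·(J_{n-3/2}(θπ)² + J_{n-1/2}(θπ)² - ((2n-1)/(θπ)) J_{n-1/2}(θπ) J_{n-3/2}(θπ)) satisfies L(θ) ~ c_n θ^{2n} as θ → 0⁺ for some constant c_n > 0 depending only on n, for every integer n ≥ 1. -/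
open Filter

/-- The Bessel function of the first kind `J_ν(x)`, defined by its power series
`J_ν(x) = ∑_{k≥0} (-1)^k / (k! Γ(ν+k+1)) (x/2)^{2k+ν}` (real powers). -/
noncomputable def besselJ (ν x : ℝ) : ℝ :=
  ∑' k : ℕ, ((-1) ^ k / ((k.factorial : ℝ) * Real.Gamma (ν + (k : ℝ) + 1))) *
    (x / 2) ^ (2 * (k : ℝ) + ν)

/-!
Write `J_ν(x) = (x/2)^ν g_ν(t)` with `t = (x/2)²` and `g_ν(t) = ∑ (-1)^k t^k / (k! Γ(ν+k+1))`,
which is continuous at `t = 0`. Then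
`J_ν² + J_{ν+1}² - (2(ν+1)/x) J_ν J_{ν+1} = (x/2)^{2ν} (g_ν (g_ν - (ν+1) g_{ν+1}) + t g_{ν+1}²)`,
and since `g_ν(0) = (ν+1) g_{ν+1}(0)` the difference `g_ν - (ν+1) g_{ν+1}` is divisible by `t`.
So the bracket is `(x/2)^{2ν+2}` times a function of `t` tending to `1 / ((ν+2) Γ(ν+2)²) > 0`.
For `ν = n - 3/2` and `x = θπ` this gives `L(θ) / θ^{2n} → (π²/2) (π/2)^{2n-1} / ((n+1/2) Γ(n+1/2)²)`.
-/

open Topology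

noncomputable def powerSeriesSum (c : ℕ → ℝ) (t : ℝ) : ℝ := ∑' k, c k * t ^ k

section PowerSeriesSum

variable {c : ℕ → ℝ} {t : ℝ}

lemma powerSeriesSum_zero (c : ℕ → ℝ) : powerSeriesSum c 0 = c 0 := by
  rw [powerSeriesSum, tsum_eq_single 0 fun k hk => by simp [zero_pow hk]]
  simp

lemma norm_mul_pow_le_abs (ht : |t| ≤ 1) (k : ℕ) : ‖c k * t ^ k‖ ≤ |c k| := by
  rw [Real.norm_eq_abs, abs_mul, abs_pow]
  exact mul_le_of_le_one_right (abs_nonneg _) (pow_le_one₀ (abs_nonneg t) ht)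

lemma continuousAt_powerSeriesSum_zero (hc : Summable fun k => |c k|) :
    ContinuousAt (powerSeriesSum c) 0 :=
  (continuousOn_tsum (fun k => (continuous_const.mul (continuous_pow k)).continuousOn) hc
      fun k _ ht => norm_mul_pow_le_abs (abs_le.2 ht) k).continuousAt
    (Icc_mem_nhds neg_one_lt_zero one_pos)

lemma powerSeriesSum_eq_add_mul_shift (hc : Summable fun k => |c k|) (ht : |t| ≤ 1) :
    powerSeriesSum c t = c 0 + t * powerSeriesSum (fun k => c (k + 1)) t := by
  rw [powerSeriesSum, (hc.of_norm_bounded (norm_mul_pow_le_abs ht)).tsum_eq_zero_add,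
    powerSeriesSum, ← tsum_mul_left]
  simp only [pow_zero, mul_one, pow_succ]
  congr 1
  exact tsum_congr fun k => by ring

end PowerSeriesSum

noncomputable def besselCoeff (ν : ℝ) (k : ℕ) : ℝ :=
  (-1) ^ k / ((k.factorial : ℝ) * Real.Gamma (ν + k + 1))

section BesselCoeff

variable {ν : ℝ}

lemma besselCoeff_zero (ν : ℝ) : besselCoeff ν 0 = (Real.Gamma (ν + 1))⁻¹ := by
  simp [besselCoeff]

lemma besselCoeff_succ {k : ℕ} (h : ν + k + 1 ≠ 0) :
    besselCoeff ν (k + 1) = -besselCoeff ν k / ((k + 1) * (ν + k + 1)) := by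
  have hk : (k : ℝ) + 1 ≠ 0 := by positivity
  rw [besselCoeff, besselCoeff, Nat.factorial_succ, Nat.cast_mul, Nat.cast_succ,
    show ν + ((k : ℝ) + 1) + 1 = ν + k + 1 + 1 by ring, Real.Gamma_add_one h]
  field_simp
  ring

lemma besselCoeff_one (ν : ℝ) : besselCoeff ν 1 = -(Real.Gamma (ν + 2))⁻¹ := by
  rw [besselCoeff, show ν + ((1 : ℕ) : ℝ) + 1 = ν + 2 by push_cast; ring]
  simp [neg_div]

lemma summable_abs_besselCoeff (hν : -1 < ν) : Summable fun k => |besselCoeff ν k| := by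
  refine summable_of_ratio_norm_eventually_le (r := 1 / 2) (by norm_num) ?_
  filter_upwards [eventually_ge_atTop 1] with k hk
  have hk' : (1 : ℝ) ≤ k := by exact_mod_cast hk
  have hprod : 2 ≤ ((k : ℝ) + 1) * (ν + k + 1) := by nlinarith
  rw [Real.norm_eq_abs, Real.norm_eq_abs, abs_abs, abs_abs,
    besselCoeff_succ (by linarith), abs_div, abs_neg,
    abs_of_pos (show 0 < ((k : ℝ) + 1) * (ν + k + 1) by linarith), div_le_iff₀ (by linarith)]
  nlinarith [abs_nonneg (besselCoeff ν k)]

lemma besselCoeff_zero_eq_mul_succ (ν : ℝ) :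
    besselCoeff ν 0 = (ν + 1) * besselCoeff (ν + 1) 0 := by
  rcases eq_or_ne (ν + 1) 0 with hν | hν
  · simp [besselCoeff_zero, hν]
  · rw [besselCoeff_zero, besselCoeff_zero, Real.Gamma_add_one hν, mul_inv, ← mul_assoc,
      mul_inv_cancel₀ hν, one_mul]

end BesselCoeff

lemma besselJ_eq_rpow_mul_powerSeriesSum {ν x : ℝ} (hx : 0 < x) :
    besselJ ν x = (x / 2) ^ ν * powerSeriesSum (besselCoeff ν) ((x / 2) ^ 2) := by
  rw [besselJ, powerSeriesSum, ← tsum_mul_left]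
  refine tsum_congr fun k => ?_
  rw [Real.rpow_add (by positivity), show 2 * (k : ℝ) = ((2 * k : ℕ) : ℝ) by push_cast; ring,
    Real.rpow_natCast, pow_mul, besselCoeff]
  ring

noncomputable def besselKernelSeries (ν t : ℝ) : ℝ :=
  powerSeriesSum (besselCoeff ν) t *
      (powerSeriesSum (fun k => besselCoeff ν (k + 1)) t -
        (ν + 1) * powerSeriesSum (fun k => besselCoeff (ν + 1) (k + 1)) t) +
    powerSeriesSum (besselCoeff (ν + 1)) t ^ 2

section BesselKernel

variable {ν : ℝ}

lemma besselKernelSeries_zero (hν : -1 < ν) :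
    besselKernelSeries ν 0 = ((ν + 2) * Real.Gamma (ν + 2) ^ 2)⁻¹ := by
  have hν1 : ν + 1 ≠ 0 := by linarith
  have hΓ : Real.Gamma (ν + 1) ≠ 0 := (Real.Gamma_pos_of_pos (by linarith)).ne'
  have hΓ2 : Real.Gamma (ν + 2) = (ν + 1) * Real.Gamma (ν + 1) := by
    rw [show ν + 2 = ν + 1 + 1 by ring, Real.Gamma_add_one hν1]
  have hΓ3 : Real.Gamma (ν + 1 + 2) = (ν + 2) * Real.Gamma (ν + 2) := by
    rw [show ν + 1 + 2 = ν + 2 + 1 by ring, Real.Gamma_add_one (by linarith)]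
  simp only [besselKernelSeries, powerSeriesSum_zero, zero_add]
  rw [besselCoeff_zero, besselCoeff_zero, besselCoeff_one, besselCoeff_one, hΓ3,
    show ν + 1 + 1 = ν + 2 by ring, hΓ2]
  have : ν + 2 ≠ 0 := by linarith
  field_simp
  ring

lemma continuousAt_besselKernelSeries_zero (hν : -1 < ν) :
    ContinuousAt (besselKernelSeries ν) 0 := by
  have hν' : -1 < ν + 1 := by linarith
  have hshift : ∀ {μ : ℝ}, -1 < μ → Summable fun k => |besselCoeff μ (k + 1)| :=
    fun hμ => (summable_nat_add_iff 1).2 (summable_abs_besselCoeff hμ)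
  exact ((continuousAt_powerSeriesSum_zero (summable_abs_besselCoeff hν)).mul
      ((continuousAt_powerSeriesSum_zero (hshift hν)).sub
        ((continuousAt_powerSeriesSum_zero (hshift hν')).const_mul (ν + 1)))).add
    ((continuousAt_powerSeriesSum_zero (summable_abs_besselCoeff hν')).pow 2)

lemma besselJ_sq_add_sq_sub_eq (hν : -1 < ν) {x : ℝ} (hx : 0 < x) (hx2 : x ≤ 2) :
    besselJ ν x ^ 2 + besselJ (ν + 1) x ^ 2 -
        2 * (ν + 1) / x * besselJ (ν + 1) x * besselJ ν x =
      (x / 2) ^ (2 * ν + 2) * besselKernelSeries ν ((x / 2) ^ 2) := by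
  have hp : 0 < x / 2 := by positivity
  have ht : |(x / 2) ^ 2| ≤ 1 := by
    rw [abs_of_nonneg (by positivity)]
    exact pow_le_one₀ hp.le (by linarith)
  have hsplit := powerSeriesSum_eq_add_mul_shift (summable_abs_besselCoeff hν) ht
  have hsplit' := powerSeriesSum_eq_add_mul_shift
    (summable_abs_besselCoeff (show -1 < ν + 1 by linarith)) ht
  rw [besselJ_eq_rpow_mul_powerSeriesSum hx, besselJ_eq_rpow_mul_powerSeriesSum hx,
    Real.rpow_add hp, Real.rpow_one, show 2 * ν + 2 = ν + ν + 2 by ring,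
    Real.rpow_add hp, Real.rpow_add hp, Real.rpow_two, besselKernelSeries, hsplit, hsplit',
    besselCoeff_zero_eq_mul_succ]
  set r := powerSeriesSum (fun k => besselCoeff ν (k + 1)) ((x / 2) ^ 2)
  set R := powerSeriesSum (fun k => besselCoeff (ν + 1) (k + 1)) ((x / 2) ^ 2)
  field_simp
  ring

end BesselKernel

lemma tendsto_besselJ_sq_add_sq_sub_div_rpow {ν : ℝ} (hν : -1 < ν) :
    Tendsto (fun x => (besselJ ν x ^ 2 + besselJ (ν + 1) x ^ 2 -
        2 * (ν + 1) / x * besselJ (ν + 1) x * besselJ ν x) / (x / 2) ^ (2 * ν + 2))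
      (𝓝[>] 0) (𝓝 ((ν + 2) * Real.Gamma (ν + 2) ^ 2)⁻¹) := by
  have ht : Tendsto (fun x : ℝ => (x / 2) ^ 2) (𝓝[>] 0) (𝓝 0) :=
    ((by fun_prop : Continuous fun x : ℝ => (x / 2) ^ 2).tendsto' 0 0 (by norm_num)).mono_left
      nhdsWithin_le_nhds
  have hkernel := (continuousAt_besselKernelSeries_zero hν).tendsto
  rw [besselKernelSeries_zero hν] at hkernel
  refine (hkernel.comp ht).congr' ?_
  filter_upwards [Ioo_mem_nhdsGT (show (0 : ℝ) < 2 by norm_num)] with x hx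
  rw [Function.comp_apply, besselJ_sq_add_sq_sub_eq hν hx.1 hx.2.le,
    mul_div_cancel_left₀ _ (Real.rpow_pos_of_pos (half_pos hx.1) _).ne']

/-- The scaled one-level density
`L(θ) = (π²/2)·θ·(J_{n-3/2}(θπ)² + J_{n-1/2}(θπ)² - ((2n-1)/(θπ)) J_{n-1/2}(θπ)J_{n-3/2}(θπ))`
behaves like `c_n θ^{2n}` as `θ → 0⁺`, for some constant `c_n > 0`, for every
integer `n ≥ 1`. -/
theorem one_level_density_small_theta (n : ℕ) (hn : 1 ≤ n) :
    ∃ c : ℝ, 0 < c ∧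
      Tendsto (fun θ : ℝ =>
        (Real.pi ^ 2 / 2 * θ *
          (besselJ ((n : ℝ) - 3/2) (θ * Real.pi) ^ 2 +
            besselJ ((n : ℝ) - 1/2) (θ * Real.pi) ^ 2 -
            (2 * (n : ℝ) - 1) / (θ * Real.pi) *
              besselJ ((n : ℝ) - 1/2) (θ * Real.pi) *
              besselJ ((n : ℝ) - 3/2) (θ * Real.pi))) / θ ^ (2 * n))
        (nhdsWithin 0 (Set.Ioi 0)) (nhds c) := by
  have hν : -1 < (n : ℝ) - 3 / 2 := by
    have : (1 : ℝ) ≤ n := by exact_mod_cast hn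
    linarith
  set ν : ℝ := n - 3 / 2
  set k := 2 * n - 1
  have hk : 2 * n = k + 1 := by omega
  have hexp : 2 * ν + 2 = k := by
    rw [Nat.cast_sub (by omega)]
    push_cast
    ring
  have hscale : Tendsto (fun θ => θ * Real.pi) (𝓝[>] 0) (𝓝[>] 0) := by
    have := ((continuous_mul_const Real.pi).continuousWithinAt (s := Set.Ioi 0) (x := 0)
      ).tendsto_nhdsWithin (t := Set.Ioi 0) fun θ hθ => mul_pos hθ Real.pi_pos
    rwa [zero_mul] at this
  have hc : 0 < ((ν + 2) * Real.Gamma (ν + 2) ^ 2)⁻¹ :=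
    inv_pos.2 (mul_pos (by linarith) (pow_pos (Real.Gamma_pos_of_pos (by linarith)) 2))
  refine ⟨Real.pi ^ 2 / 2 * (Real.pi / 2) ^ k * ((ν + 2) * Real.Gamma (ν + 2) ^ 2)⁻¹,
    mul_pos (by positivity) hc, ?_⟩
  refine (((tendsto_besselJ_sq_add_sq_sub_div_rpow hν).comp hscale).const_mul _).congr' ?_
  filter_upwards [self_mem_nhdsWithin] with θ (hθ : 0 < θ)
  rw [Function.comp_apply, hexp, Real.rpow_natCast, show (n : ℝ) - 1 / 2 = ν + 1 by ring,
    show 2 * (n : ℝ) - 1 = 2 * (ν + 1) by ring, hk]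
  field_simp
  ring
end
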